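/- arXiv:math/0609457 — 3 statements merged into one kernel-verified Lean document; each statement's English description precedes it below -/
import Mathlib

section
/- Under randomization, monotonicity S^1 ≥ S^0, and the exclusion restriction that Y^1 = Y^0 whenever S^1 = S^0, the complier average causal effect is identified by the Wald formula: E[Y^1 − Y^0 | S^1 = 1, S^0 = 0] = (E[Y | A=1] − E[Y | A=0]) / (pr(S=1 | A=1) − pr(S=1 | A=0)), provided the denominator is nonzero. -/
open Finset
open scoped Classical

/-- Probability of an event `E` under weight function `w` on a finite space. -/
noncomputable def pr {Ω : Type*} [Fintype Ω] (w : Ω → ℝ) (E : Ω → Prop) : ℝ :=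
  ∑ ω, if E ω then w ω else 0

/-- Conditional probability of `E` given `F`. -/
noncomputable def cpr {Ω : Type*} [Fintype Ω] (w : Ω → ℝ) (E F : Ω → Prop) : ℝ :=
  pr w (fun ω => E ω ∧ F ω) / pr w F

/-- Expectation of `f` under `w`. -/
noncomputable def ex {Ω : Type*} [Fintype Ω] (w : Ω → ℝ) (f : Ω → ℝ) : ℝ :=
  ∑ ω, w ω * f ω

/-- Conditional expectation of `f` given event `F`. -/
noncomputable def cex {Ω : Type*} [Fintype Ω] (w : Ω → ℝ) (f : Ω → ℝ) (F : Ω → Prop) : ℝ :=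
  (∑ ω, if F ω then w ω * f ω else 0) / pr w F

/-- Under randomization, monotonicity `S⁰ ≤ S¹`, and the exclusion restriction, the complier
average causal effect is identified by the Wald formula. -/
theorem wald_identifies_cace
    {Ω : Type*} [Fintype Ω] (w : Ω → ℝ)
    (hw : ∀ ω, 0 ≤ w ω) (hw1 : ∑ ω, w ω = 1)
    (A S0 S1 S : Ω → Bool) (Y0 Y1 Y : Ω → ℝ)
    (hS : ∀ ω, S ω = if A ω then S1 ω else S0 ω)
    (hY : ∀ ω, Y ω = if A ω then Y1 ω else Y0 ω)
    (indep : ∀ (a : Bool) (g : Bool → Bool → ℝ → ℝ → ℝ),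
      ex w (fun ω => (if A ω = a then (1:ℝ) else 0) * g (S0 ω) (S1 ω) (Y0 ω) (Y1 ω))
        = pr w (fun ω => A ω = a) * ex w (fun ω => g (S0 ω) (S1 ω) (Y0 ω) (Y1 ω)))
    (mono : ∀ ω, S0 ω ≤ S1 ω)
    (excl : ∀ ω, S0 ω = S1 ω → Y0 ω = Y1 ω)
    (hA0 : 0 < pr w (fun ω => A ω = false))
    (hA1 : 0 < pr w (fun ω => A ω = true))
    (hcomp : 0 < pr w (fun ω => S1 ω = true ∧ S0 ω = false))
    (hden : cpr w (fun ω => S ω = true) (fun ω => A ω = true)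
        - cpr w (fun ω => S ω = true) (fun ω => A ω = false) ≠ 0) :
    cex w (fun ω => Y1 ω - Y0 ω) (fun ω => S1 ω = true ∧ S0 ω = false)
      = (cex w Y (fun ω => A ω = true) - cex w Y (fun ω => A ω = false))
        / (cpr w (fun ω => S ω = true) (fun ω => A ω = true)
            - cpr w (fun ω => S ω = true) (fun ω => A ω = false)) := by
  have e1 : cex w Y (fun ω => A ω = true) = ex w Y1 := by
    simp only [cex]
    rw [div_eq_iff (ne_of_gt hA1), mul_comm, ← indep true (fun _ _ _ y1 => y1)]
    unfold ex
    exact Finset.sum_congr rfl fun ω _ => by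
      by_cases h : A ω = true <;> simp [h, hY ω]
  have e0 : cex w Y (fun ω => A ω = false) = ex w Y0 := by
    simp only [cex]
    rw [div_eq_iff (ne_of_gt hA0), mul_comm, ← indep false (fun _ _ y0 _ => y0)]
    unfold ex
    exact Finset.sum_congr rfl fun ω _ => by
      by_cases h : A ω = false <;> simp [h, hY ω]
  have exind : ∀ (T : Ω → Bool),
      ex w (fun ω => if T ω = true then (1:ℝ) else 0) = pr w (fun ω => T ω = true) := by
    intro T
    unfold ex pr
    exact Finset.sum_congr rfl fun ω _ => by by_cases h : T ω = true <;> simp [h]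
  have c1 : cpr w (fun ω => S ω = true) (fun ω => A ω = true)
      = pr w (fun ω => S1 ω = true) := by
    simp only [cpr]
    rw [div_eq_iff (ne_of_gt hA1)]
    have h2 : pr w (fun ω => S1 ω = true) * pr w (fun ω => A ω = true)
        = ex w fun ω => (if A ω = true then (1:ℝ) else 0)
            * (if S1 ω = true then (1:ℝ) else 0) := by
      rw [indep true (fun _ s1 _ _ => if s1 = true then (1:ℝ) else 0), exind S1, mul_comm]
    rw [h2]
    unfold pr ex
    exact Finset.sum_congr rfl fun ω _ => by
      by_cases h : A ω = true <;> by_cases h' : S1 ω = true <;> simp [h, h', hS ω]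
  have c0 : cpr w (fun ω => S ω = true) (fun ω => A ω = false)
      = pr w (fun ω => S0 ω = true) := by
    simp only [cpr]
    rw [div_eq_iff (ne_of_gt hA0)]
    have h2 : pr w (fun ω => S0 ω = true) * pr w (fun ω => A ω = false)
        = ex w fun ω => (if A ω = false then (1:ℝ) else 0)
            * (if S0 ω = true then (1:ℝ) else 0) := by
      rw [indep false (fun s0 _ _ _ => if s0 = true then (1:ℝ) else 0), exind S0, mul_comm]
    rw [h2]
    unfold pr ex
    exact Finset.sum_congr rfl fun ω _ => by
      by_cases h : A ω = false <;> by_cases h' : S0 ω = true <;> simp [h, h', hS ω]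
  have dcomp : pr w (fun ω => S1 ω = true) - pr w (fun ω => S0 ω = true)
      = pr w (fun ω => S1 ω = true ∧ S0 ω = false) := by
    unfold pr
    rw [← Finset.sum_sub_distrib]
    refine Finset.sum_congr rfl fun ω _ => ?_
    have hm := mono ω
    cases h1 : S1 ω <;> cases h0 : S0 ω <;>
      first
      | (rw [h1, h0] at hm; exact absurd hm (by decide))
      | simp [h1, h0]
  have ncomp : ex w Y1 - ex w Y0
      = ∑ ω, if S1 ω = true ∧ S0 ω = false then w ω * (Y1 ω - Y0 ω) else 0 := by
    unfold ex
    rw [← Finset.sum_sub_distrib]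
    refine Finset.sum_congr rfl fun ω _ => ?_
    have hm := mono ω
    by_cases h : S1 ω = true ∧ S0 ω = false
    · rw [if_pos h]; ring
    · rw [if_neg h]
      have heq : S0 ω = S1 ω := by
        cases h1 : S1 ω <;> cases h0 : S0 ω <;>
          first
          | (rw [h1, h0] at hm; exact absurd hm (by decide))
          | simp_all
      rw [excl ω heq]; ring
  rw [e1, e0, c1, c0, dcomp]
  simp only [cex]
  rw [← ncomp]
end

section
/- In the model Y^{a,s} = Y^{0,0} + aγ_1 + sγ_2 + asγ_3 with S^1 ≤ S^0 and A independent of (S^0, S^1, Y^{0,0}), the realized effect of treatment among treated subjects with S=0 is Ψ_0 = γ_1 − pr(S^0 = 1 | S^1 = 0)·γ_2, and among treated subjects with S=1 it is Ψ_1 = γ_1 + γ_3, where Ψ_s = E[Y^1 − Y^0 | A = 1, S = s]. -/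
open Finset
open scoped Classical

/-- In the additive joint-effects model with monotonicity and randomization, the realized
effects of treatment among the treated are `Ψ₀ = γ₁ − pr(S⁰ = 1 | S¹ = 0)·γ₂` (for `S = 0`)
and `Ψ₁ = γ₁ + γ₃` (for `S = 1`), where `Ψ_s = E[Y¹ − Y⁰ | A = 1, S = s]`. -/
theorem realized_effects_in_joint_model
    {Ω : Type*} [Fintype Ω] (w : Ω → ℝ)
    (hw : ∀ ω, 0 ≤ w ω) (hw1 : ∑ ω, w ω = 1)
    (A S0 S1 S : Ω → Bool) (Y00 : Ω → ℝ) (γ1 γ2 γ3 : ℝ)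
    (Yas : Ω → Bool → Bool → ℝ)
    (model : ∀ ω (a s : Bool), Yas ω a s
        = Y00 ω + (if a then γ1 else 0) + (if s then γ2 else 0)
          + (if a ∧ s then γ3 else 0))
    (mono : ∀ ω, S1 ω ≤ S0 ω)
    (hS : ∀ ω, S ω = if A ω then S1 ω else S0 ω)
    (indep : ∀ (a : Bool) (h : Bool → Bool → ℝ → ℝ),
      ex w (fun ω => (if A ω = a then (1:ℝ) else 0) * h (S0 ω) (S1 ω) (Y00 ω))
        = pr w (fun ω => A ω = a) * ex w (fun ω => h (S0 ω) (S1 ω) (Y00 ω)))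
    (hpos0 : 0 < pr w (fun ω => A ω = true ∧ S1 ω = false))
    (hpos1 : 0 < pr w (fun ω => A ω = true ∧ S1 ω = true)) :
    cex w (fun ω => Yas ω true (S1 ω) - Yas ω false (S0 ω))
        (fun ω => A ω = true ∧ S ω = false)
      = γ1 - cpr w (fun ω => S0 ω = true) (fun ω => S1 ω = false) * γ2 ∧
    cex w (fun ω => Yas ω true (S1 ω) - Yas ω false (S0 ω))
        (fun ω => A ω = true ∧ S ω = true)
      = γ1 + γ3 := by
  classical
  set f : Ω → ℝ := fun ω => Yas ω true (S1 ω) - Yas ω false (S0 ω) with hf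
  have pr_nonneg : ∀ (E : Ω → Prop), 0 ≤ pr w E := by
    intro E
    unfold pr
    apply Finset.sum_nonneg
    intro ω _
    split <;> simp [hw ω]
  -- independence consequences
  have h1 : pr w (fun ω => A ω = true ∧ S1 ω = false)
      = pr w (fun ω => A ω = true) * pr w (fun ω => S1 ω = false) := by
    have hin := indep true (fun s0 s1 y => if s1 = false then 1 else 0)
    have e1 : ex w (fun ω => (if A ω = true then (1:ℝ) else 0)
        * (if S1 ω = false then (1:ℝ) else 0))
        = pr w (fun ω => A ω = true ∧ S1 ω = false) := by
      unfold ex pr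
      apply Finset.sum_congr rfl
      intro ω _
      by_cases hA : A ω = true <;> by_cases hs : S1 ω = false <;> simp [hA, hs]
    have e2 : ex w (fun ω => if S1 ω = false then (1:ℝ) else 0)
        = pr w (fun ω => S1 ω = false) := by
      unfold ex pr
      apply Finset.sum_congr rfl
      intro ω _
      by_cases hs : S1 ω = false <;> simp [hs]
    rw [← e1, ← e2]
    exact hin
  have h2 : pr w (fun ω => A ω = true ∧ (S0 ω = true ∧ S1 ω = false))
      = pr w (fun ω => A ω = true) * pr w (fun ω => S0 ω = true ∧ S1 ω = false) := by
    have hin := indep true (fun s0 s1 y => if s0 = true ∧ s1 = false then 1 else 0)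
    have e1 : ex w (fun ω => (if A ω = true then (1:ℝ) else 0)
        * (if S0 ω = true ∧ S1 ω = false then (1:ℝ) else 0))
        = pr w (fun ω => A ω = true ∧ (S0 ω = true ∧ S1 ω = false)) := by
      unfold ex pr
      apply Finset.sum_congr rfl
      intro ω _
      by_cases hA : A ω = true <;> by_cases hs : S0 ω = true ∧ S1 ω = false <;>
        simp [hA, hs]
    have e2 : ex w (fun ω => if S0 ω = true ∧ S1 ω = false then (1:ℝ) else 0)
        = pr w (fun ω => S0 ω = true ∧ S1 ω = false) := by
      unfold ex pr
      apply Finset.sum_congr rfl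
      intro ω _
      by_cases hs : S0 ω = true ∧ S1 ω = false <;> simp [hs]
    rw [← e1, ← e2]
    exact hin
  set pA := pr w (fun ω => A ω = true) with hpA
  set p0 := pr w (fun ω => S1 ω = false) with hp0
  set p00 := pr w (fun ω => S0 ω = true ∧ S1 ω = false) with hp00
  have hprod : 0 < pA * p0 := h1 ▸ hpos0
  have hAnn : 0 ≤ pA := pr_nonneg (fun ω => A ω = true)
  have h0nn : 0 ≤ p0 := pr_nonneg (fun ω => S1 ω = false)
  have hpApos : 0 < pA := by nlinarith
  have hp0pos : 0 < p0 := by nlinarith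
  constructor
  · -- case S = 0
    have hden : pr w (fun ω => A ω = true ∧ S ω = false)
        = pA * p0 := by
      rw [← h1]
      unfold pr
      apply Finset.sum_congr rfl
      intro ω _
      have := hS ω
      by_cases hA : A ω = true <;> simp [hA] at this ⊢ <;> simp [this]
    have hnum : (∑ ω, @ite _ (A ω = true ∧ S ω = false) (Classical.propDecidable _) (w ω * f ω) 0)
        = γ1 * (pA * p0) - γ2 * (pA * p00) := by
      rw [← h1, ← h2]
      unfold pr
      rw [Finset.mul_sum, Finset.mul_sum, ← Finset.sum_sub_distrib]
      apply Finset.sum_congr rfl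
      intro ω _
      have hSω := hS ω
      cases hA : A ω <;> rw [hA] at hSω <;> simp only [if_true, if_false, Bool.false_eq_true] at hSω
      · simp [hA]
      · cases h1s : S1 ω <;> rw [h1s] at hSω
        · cases h0s : S0 ω <;>
            simp [hf, model, hA, h1s, h0s, hSω] <;> ring
        · simp [hA, h1s, hSω]
    unfold cex cpr
    beta_reduce
    rw [hnum, hden]
    rw [show pr w (fun ω => S0 ω = true ∧ S1 ω = false) = p00 from rfl,
        show pr w (fun ω => S1 ω = false) = p0 from rfl]
    field_simp
  · -- case S = 1
    have hden : pr w (fun ω => A ω = true ∧ S ω = true)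
        = pr w (fun ω => A ω = true ∧ S1 ω = true) := by
      unfold pr
      apply Finset.sum_congr rfl
      intro ω _
      have := hS ω
      by_cases hA : A ω = true <;> simp [hA] at this ⊢ <;> simp [this]
    have hnum : (∑ ω, @ite _ (A ω = true ∧ S ω = true) (Classical.propDecidable _) (w ω * f ω) 0)
        = (γ1 + γ3) * pr w (fun ω => A ω = true ∧ S1 ω = true) := by
      unfold pr
      rw [Finset.mul_sum]
      apply Finset.sum_congr rfl
      intro ω _
      have hSω := hS ω
      cases hA : A ω <;> rw [hA] at hSω <;> simp only [if_true, if_false, Bool.false_eq_true] at hSω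
      · simp [hA]
      · cases h1s : S1 ω <;> rw [h1s] at hSω
        · simp [hA, h1s, hSω]
        · have h0s : S0 ω = true := by
            have := mono ω
            rw [h1s] at this
            exact le_antisymm (Bool.le_true _) this
          simp [hf, model, hA, h1s, h0s, hSω]
          ring
    unfold cex
    beta_reduce
    rw [hnum, hden]
    field_simp
end

section
/- Under randomization and the sharp null hypothesis Y^0 = Y^1 pointwise, the naive contrast satisfies pr(Y=1 | A=1, S=1) − pr(Y=1 | A=0, S=1) = pr(Y^0=1 | S^1=1) − pr(Y^0=1 | S^0=1); i.e., the naive contrast equals the difference in baseline risk between the subpopulations selected by S^1=1 and S^0=1. -/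
open Finset
open scoped Classical

lemma pr_congr {Ω : Type*} [Fintype Ω] (w : Ω → ℝ) {E F : Ω → Prop}
    (h : ∀ ω, E ω ↔ F ω) : pr w E = pr w F := by
  unfold pr; exact Finset.sum_congr rfl fun ω _ => by rw [(h ω).eq]

lemma pr_split {Ω : Type*} [Fintype Ω] (w : Ω → ℝ) (E : Ω → Prop) (B : Ω → Bool) :
    pr w E = pr w (fun ω => E ω ∧ B ω = true) + pr w (fun ω => E ω ∧ B ω = false) := by
  unfold pr
  rw [← Finset.sum_add_distrib]
  refine Finset.sum_congr rfl fun ω _ => ?_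
  cases hb : B ω <;> by_cases hE : E ω <;> simp [hE, hb]

/-- Under randomization and the sharp null `Y⁰ = Y¹`, the naive contrast equals the
difference in baseline risk between the subpopulations selected by `S¹ = 1` and `S⁰ = 1`. -/
theorem naive_contrast_is_selection_bias
    {Ω : Type*} [Fintype Ω] (w : Ω → ℝ)
    (hw : ∀ ω, 0 ≤ w ω) (hw1 : ∑ ω, w ω = 1)
    (A S0 S1 Y0 Y1 S Y : Ω → Bool)
    (hS : ∀ ω, S ω = if A ω then S1 ω else S0 ω)
    (hY : ∀ ω, Y ω = if A ω then Y1 ω else Y0 ω)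
    (indep : ∀ a s0 s1 y0 y1 : Bool,
      pr w (fun ω => A ω = a ∧ S0 ω = s0 ∧ S1 ω = s1 ∧ Y0 ω = y0 ∧ Y1 ω = y1)
        = pr w (fun ω => A ω = a) *
          pr w (fun ω => S0 ω = s0 ∧ S1 ω = s1 ∧ Y0 ω = y0 ∧ Y1 ω = y1))
    (hnull : ∀ ω, Y0 ω = Y1 ω)
    (hpos1 : 0 < pr w (fun ω => A ω = true ∧ S1 ω = true))
    (hpos0 : 0 < pr w (fun ω => A ω = false ∧ S0 ω = true)) :
    cpr w (fun ω => Y ω = true) (fun ω => A ω = true ∧ S ω = true)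
      - cpr w (fun ω => Y ω = true) (fun ω => A ω = false ∧ S ω = true)
    = cpr w (fun ω => Y0 ω = true) (fun ω => S1 ω = true)
      - cpr w (fun ω => Y0 ω = true) (fun ω => S0 ω = true) := by
  -- L1 : full factorization with Y0 only
  have L1 : ∀ a s0 s1 y0 : Bool,
      pr w (fun ω => A ω = a ∧ S0 ω = s0 ∧ S1 ω = s1 ∧ Y0 ω = y0)
        = pr w (fun ω => A ω = a) * pr w (fun ω => S0 ω = s0 ∧ S1 ω = s1 ∧ Y0 ω = y0) := by
    intro a s0 s1 y0
    have e1 : pr w (fun ω => A ω = a ∧ S0 ω = s0 ∧ S1 ω = s1 ∧ Y0 ω = y0)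
        = pr w (fun ω => A ω = a ∧ S0 ω = s0 ∧ S1 ω = s1 ∧ Y0 ω = y0 ∧ Y1 ω = y0) := by
      apply pr_congr; intro ω
      constructor
      · rintro ⟨h1, h2, h3, h4⟩; exact ⟨h1, h2, h3, h4, (hnull ω) ▸ h4⟩
      · rintro ⟨h1, h2, h3, h4, _⟩; exact ⟨h1, h2, h3, h4⟩
    have e2 : pr w (fun ω => S0 ω = s0 ∧ S1 ω = s1 ∧ Y0 ω = y0 ∧ Y1 ω = y0)
        = pr w (fun ω => S0 ω = s0 ∧ S1 ω = s1 ∧ Y0 ω = y0) := by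
      apply pr_congr; intro ω
      constructor
      · rintro ⟨h2, h3, h4, _⟩; exact ⟨h2, h3, h4⟩
      · rintro ⟨h2, h3, h4⟩; exact ⟨h2, h3, h4, (hnull ω) ▸ h4⟩
    rw [e1, indep a s0 s1 y0 y0, e2]
  -- L2 : marginalize S0
  have L2 : ∀ a s1 y0 : Bool,
      pr w (fun ω => A ω = a ∧ S1 ω = s1 ∧ Y0 ω = y0)
        = pr w (fun ω => A ω = a) * pr w (fun ω => S1 ω = s1 ∧ Y0 ω = y0) := by
    intro a s1 y0
    rw [pr_split w (fun ω => A ω = a ∧ S1 ω = s1 ∧ Y0 ω = y0) S0,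
        pr_split w (fun ω => S1 ω = s1 ∧ Y0 ω = y0) S0, mul_add]
    congr 1
    · rw [pr_congr w (F := fun ω => A ω = a ∧ S0 ω = true ∧ S1 ω = s1 ∧ Y0 ω = y0)
        (by intro ω; tauto), L1,
        pr_congr w (E := fun ω => S0 ω = true ∧ S1 ω = s1 ∧ Y0 ω = y0)
          (F := fun ω => (S1 ω = s1 ∧ Y0 ω = y0) ∧ S0 ω = true) (by intro ω; tauto)]
    · rw [pr_congr w (F := fun ω => A ω = a ∧ S0 ω = false ∧ S1 ω = s1 ∧ Y0 ω = y0)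
        (by intro ω; tauto), L1,
        pr_congr w (E := fun ω => S0 ω = false ∧ S1 ω = s1 ∧ Y0 ω = y0)
          (F := fun ω => (S1 ω = s1 ∧ Y0 ω = y0) ∧ S0 ω = false) (by intro ω; tauto)]
  -- L2' : marginalize S1
  have L2' : ∀ a s0 y0 : Bool,
      pr w (fun ω => A ω = a ∧ S0 ω = s0 ∧ Y0 ω = y0)
        = pr w (fun ω => A ω = a) * pr w (fun ω => S0 ω = s0 ∧ Y0 ω = y0) := by
    intro a s0 y0
    rw [pr_split w (fun ω => A ω = a ∧ S0 ω = s0 ∧ Y0 ω = y0) S1,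
        pr_split w (fun ω => S0 ω = s0 ∧ Y0 ω = y0) S1, mul_add]
    congr 1
    · rw [pr_congr w (F := fun ω => A ω = a ∧ S0 ω = s0 ∧ S1 ω = true ∧ Y0 ω = y0)
        (by intro ω; tauto), L1,
        pr_congr w (E := fun ω => S0 ω = s0 ∧ S1 ω = true ∧ Y0 ω = y0)
          (F := fun ω => (S0 ω = s0 ∧ Y0 ω = y0) ∧ S1 ω = true) (by intro ω; tauto)]
    · rw [pr_congr w (F := fun ω => A ω = a ∧ S0 ω = s0 ∧ S1 ω = false ∧ Y0 ω = y0)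
        (by intro ω; tauto), L1,
        pr_congr w (E := fun ω => S0 ω = s0 ∧ S1 ω = false ∧ Y0 ω = y0)
          (F := fun ω => (S0 ω = s0 ∧ Y0 ω = y0) ∧ S1 ω = false) (by intro ω; tauto)]
  -- L3 : marginals
  have L3 : ∀ a s1 : Bool,
      pr w (fun ω => A ω = a ∧ S1 ω = s1)
        = pr w (fun ω => A ω = a) * pr w (fun ω => S1 ω = s1) := by
    intro a s1
    rw [pr_split w (fun ω => A ω = a ∧ S1 ω = s1) Y0,
        pr_split w (fun ω => S1 ω = s1) Y0, mul_add]
    congr 1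
    · rw [pr_congr w (F := fun ω => A ω = a ∧ S1 ω = s1 ∧ Y0 ω = true)
        (by intro ω; tauto), L2]
    · rw [pr_congr w (F := fun ω => A ω = a ∧ S1 ω = s1 ∧ Y0 ω = false)
        (by intro ω; tauto), L2]
  have L3' : ∀ a s0 : Bool,
      pr w (fun ω => A ω = a ∧ S0 ω = s0)
        = pr w (fun ω => A ω = a) * pr w (fun ω => S0 ω = s0) := by
    intro a s0
    rw [pr_split w (fun ω => A ω = a ∧ S0 ω = s0) Y0,
        pr_split w (fun ω => S0 ω = s0) Y0, mul_add]
    congr 1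
    · rw [pr_congr w (F := fun ω => A ω = a ∧ S0 ω = s0 ∧ Y0 ω = true)
        (by intro ω; tauto), L2']
    · rw [pr_congr w (F := fun ω => A ω = a ∧ S0 ω = s0 ∧ Y0 ω = false)
        (by intro ω; tauto), L2']
  -- positivity of pr(A=a)
  have hA1 : pr w (fun ω => A ω = true) ≠ 0 := by
    have := hpos1; rw [L3 true true] at this
    exact (mul_pos_iff.mp this).elim (fun h => ne_of_gt h.1)
      (fun h => absurd h.1 (not_lt.mpr (Finset.sum_nonneg fun ω _ => by
        split <;> [exact hw ω; rfl])))
  have hA0 : pr w (fun ω => A ω = false) ≠ 0 := by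
    have := hpos0; rw [L3' false true] at this
    exact (mul_pos_iff.mp this).elim (fun h => ne_of_gt h.1)
      (fun h => absurd h.1 (not_lt.mpr (Finset.sum_nonneg fun ω _ => by
        split <;> [exact hw ω; rfl])))
  -- rewrite the two conditional probabilities
  have c1 : cpr w (fun ω => Y ω = true) (fun ω => A ω = true ∧ S ω = true)
      = cpr w (fun ω => Y0 ω = true) (fun ω => S1 ω = true) := by
    unfold cpr
    have num : pr w (fun ω => Y ω = true ∧ A ω = true ∧ S ω = true)
        = pr w (fun ω => A ω = true ∧ S1 ω = true ∧ Y0 ω = true) := by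
      apply pr_congr; intro ω
      have hs := hS ω; have hy := hY ω; have hn := hnull ω
      cases hA : A ω <;> simp [hA] at hs hy
      · simp [hA]
      · rw [hs, hy, ← hn]; simp [hA]; tauto
    have den : pr w (fun ω => A ω = true ∧ S ω = true)
        = pr w (fun ω => A ω = true ∧ S1 ω = true) := by
      apply pr_congr; intro ω
      have hs := hS ω
      cases hA : A ω <;> simp [hA] at hs <;> simp [hs]
    rw [num, den, L2, L3,
      pr_congr w (E := fun ω => Y0 ω = true ∧ S1 ω = true)
        (F := fun ω => S1 ω = true ∧ Y0 ω = true) (by intro ω; tauto),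
      mul_div_mul_left _ _ hA1]
  have c0 : cpr w (fun ω => Y ω = true) (fun ω => A ω = false ∧ S ω = true)
      = cpr w (fun ω => Y0 ω = true) (fun ω => S0 ω = true) := by
    unfold cpr
    have num : pr w (fun ω => Y ω = true ∧ A ω = false ∧ S ω = true)
        = pr w (fun ω => A ω = false ∧ S0 ω = true ∧ Y0 ω = true) := by
      apply pr_congr; intro ω
      have hs := hS ω; have hy := hY ω
      cases hA : A ω <;> simp [hA] at hs hy
      · rw [hs, hy]; simp [hA]; tauto
      · simp [hA]
    have den : pr w (fun ω => A ω = false ∧ S ω = true)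
        = pr w (fun ω => A ω = false ∧ S0 ω = true) := by
      apply pr_congr; intro ω
      have hs := hS ω
      cases hA : A ω <;> simp [hA] at hs <;> simp [hs]
    rw [num, den, L2', L3',
      pr_congr w (E := fun ω => Y0 ω = true ∧ S0 ω = true)
        (F := fun ω => S0 ω = true ∧ Y0 ω = true) (by intro ω; tauto),
      mul_div_mul_left _ _ hA0]
  rw [c1, c0]
end
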